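/- Let Γ be a finite simplicial graph with vertex set V such that Z = {v ∈ V : st(v) = V} is non-empty, and let A = A(Γ). Let π_{a,K₁}, π_{a,K₂}, π_{b,L₁}, π_{b,L₂} be four distinct partial conjugations (so K₁ ≠ K₂ and L₁ ≠ L₂). Then π_{a,Kᵢ} and π_{b,Lⱼ} fail to commute in Aut(A) for all i, j ∈ {1,2} if and only if the set {π_{a,K₁}, π_{a,K₂}, π_{b,L₁}, π_{b,L₂}} is a δ-p-set. -/

import Mathlib

open SimpleGraph

/-- The star of a vertex: the vertex together with its neighbours. -/
def Gstar {V : Type} (Γ : SimpleGraph V) (a : V) : Set V := insert a (Γ.neighborSet a)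

/-- The set of vertices whose star is the whole vertex set. -/
def Zset {V : Type} (Γ : SimpleGraph V) : Set V := {v | Gstar Γ v = Set.univ}

/-- `K` is (the vertex set of) a connected component of the full subgraph of `Γ`
induced on the vertex set `S`. -/
def IsCompOf {V : Type} (Γ : SimpleGraph V) (S K : Set V) : Prop :=
  ∃ c : (Γ.induce S).ConnectedComponent, K = Subtype.val '' c.supp

/-- The defining relators of the right-angled Artin group of `Γ`. -/
def raagRels {V : Type} (Γ : SimpleGraph V) : Set (FreeGroup V) :=
  {r | ∃ a b : V, Γ.Adj a b ∧
    r = FreeGroup.of a * FreeGroup.of b * (FreeGroup.of a)⁻¹ * (FreeGroup.of b)⁻¹}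

/-- The right-angled Artin group `A(Γ)`. -/
abbrev RAAG {V : Type} (Γ : SimpleGraph V) : Type := PresentedGroup (raagRels Γ)

/-- The generator of `A(Γ)` corresponding to a vertex `v`. -/
def raagGen {V : Type} (Γ : SimpleGraph V) (v : V) : RAAG Γ := PresentedGroup.of v

/-- The pure symmetric automorphism group: automorphisms sending each standard
generator to a conjugate of itself. -/
def PSA {V : Type} (Γ : SimpleGraph V) : Subgroup (MulAut (RAAG Γ)) where
  carrier := {φ | ∀ v : V, IsConj (raagGen Γ v) (φ (raagGen Γ v))}
  one_mem' := fun v => IsConj.refl _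
  mul_mem' := by
    intro φ ψ hφ hψ v
    have h2 : IsConj (φ (raagGen Γ v)) (φ (ψ (raagGen Γ v))) :=
      φ.toMonoidHom.map_isConj (hψ v)
    simpa [MulAut.mul_apply] using (hφ v).trans h2
  inv_mem' := by
    intro φ hφ v
    have h := (φ⁻¹ : MulAut (RAAG _)).toMonoidHom.map_isConj (hφ v)
    simp only [MulEquiv.toMonoidHom_eq_coe, MonoidHom.coe_coe, MulAut.inv_def,
      MulEquiv.symm_apply_apply] at h
    exact h.symm

/-- `φ` is the partial conjugation `π_{a,K}`. -/
def IsPartialConj {V : Type} (Γ : SimpleGraph V) (a : V) (K : Set V)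
    (φ : MulAut (RAAG Γ)) : Prop :=
  IsCompOf Γ (Gstar Γ a)ᶜ K ∧
  (∀ v ∈ K, φ (raagGen Γ v) = (raagGen Γ a)⁻¹ * raagGen Γ v * raagGen Γ a) ∧
  (∀ v ∉ K, φ (raagGen Γ v) = raagGen Γ v)

/-- Combinatorial data (acting letter, domain) of the partial conjugations. -/
def PCSet {V : Type} (Γ : SimpleGraph V) : Set (V × Set V) :=
  {p | IsCompOf Γ (Gstar Γ p.1)ᶜ p.2}

/-- A non-trivial admissible partition (for p-sets). -/
def IsAdmissiblePartition {V : Type} (Q₁ Q₂ : Set (V × Set V)) : Prop :=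
  Disjoint Q₁ Q₂ ∧ Q₁.Nonempty ∧ Q₂.Nonempty ∧
    ∀ p ∈ Q₁, ∀ q ∈ Q₂, p.1 ∈ q.2 ∧ q.1 ∈ p.2

/-- A p-set of partial conjugations. -/
def IsPSet {V : Type} (Γ : SimpleGraph V) (Q : Set (V × Set V)) : Prop :=
  Q ⊆ PCSet Γ ∧
  (∀ a : V, {p ∈ Q | p.1 = a}.Subsingleton) ∧
  ∃ Q₁ Q₂ : Set (V × Set V), Q₁ ∪ Q₂ = Q ∧ IsAdmissiblePartition Q₁ Q₂

/-- A non-trivial admissible partition (for δ-p-sets). -/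
def IsDeltaAdmissiblePartition {V : Type} (Q₁ Q₂ : Set (V × Set V)) : Prop :=
  Disjoint Q₁ Q₂ ∧ Q₁.Nonempty ∧ Q₂.Nonempty ∧
    ∀ p ∈ Q₁, ∀ q ∈ Q₂, p.1 ∈ q.2 ∨ q.1 ∈ p.2 ∨ p.2 = q.2

/-- A δ-p-set of partial conjugations. -/
def IsDeltaPSet {V : Type} (Γ : SimpleGraph V) (Q : Set (V × Set V)) : Prop :=
  Q ⊆ PCSet Γ ∧
  (∀ a : V, a ∉ Zset Γ →
    ({p ∈ Q | p.1 = a}.ncard = 0 ∨ {p ∈ Q | p.1 = a}.ncard = 2)) ∧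
  ∃ Q₁ Q₂ : Set (V × Set V), Q₁ ∪ Q₂ = Q ∧ IsDeltaAdmissiblePartition Q₁ Q₂

/-- `Γ` has a separating intersection of links. -/
def HasSIL {V : Type} (Γ : SimpleGraph V) : Prop :=
  ∃ a b : V, a ≠ b ∧ ¬Γ.Adj a b ∧
    ∃ M : Set V, IsCompOf Γ (Γ.neighborSet a ∩ Γ.neighborSet b)ᶜ M ∧ a ∉ M ∧ b ∉ M

/-- The full subgraph spanned by `U` is dominating. -/
def Dominating {V : Type} (Γ : SimpleGraph V) (U : Set V) : Prop :=
  ∀ v : V, v ∈ U ∨ ∃ u ∈ U, Γ.Adj v u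

/-- The full subgraph spanned by `U` is disconnected or non-dominating. -/
def Missing {V : Type} (Γ : SimpleGraph V) (U : Set V) : Prop :=
  ¬(Γ.induce U).Connected ∨ ¬Dominating Γ U

/-!
For `a ≠ b`, the partial conjugations `π_{a,K}` and `π_{b,L}` commute when `a` and `b` are
adjacent, or when `a ∉ L`, `b ∉ K` and `K ∩ L = ∅`; and if `a, b` are not adjacent, `a ∉ L`,
`b ∉ K`, then `K` avoids `st(b)` and `L` avoids `st(a)`, so `K` and `L` meet only if `K = L`.
Hence non-commutation forces `a ∈ L ∨ b ∈ K ∨ K = L`, the δ-p-set condition on the pair.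

Conversely, for non-adjacent `a, b` each of `a ∈ L ∧ b ∈ K`, `a ∈ L ∧ K ⊄ L`, `b ∈ K ∧ L ⊄ K`
and `K = L` is detected by sending `a`, `b` and a suitable third vertex to the transpositions
`(0 1), (1 2), (2 3)` of `S₄` and all other generators to `1`. Given the δ-p-set condition
on all four pairs, `a ∈ L`, `b ∉ K` and `K ⊆ L` are impossible: the condition on
`(π_{a,K}, π_{b,L'})` would force `a ∈ L'` or `L' = K`, and either way `L'` meets `L`.

In a δ-p-set partition, `π_{a,K₁}` and `π_{a,K₂}` violate the condition, so they lie on the same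
side; the same holds for `b`, so the partition is the one by acting letter.
-/

variable {V : Type} {Γ : SimpleGraph V}

lemma mem_compl_gstar_iff {a b : V} : b ∈ (Gstar Γ a)ᶜ ↔ b ≠ a ∧ ¬Γ.Adj a b := by
  simp [Gstar]

namespace IsCompOf

variable {S S' K L : Set V} {a b v w : V}

lemma nonempty (h : IsCompOf Γ S K) : K.Nonempty := by
  obtain ⟨c, rfl⟩ := h
  exact c.nonempty_supp.image _

lemma subset (h : IsCompOf Γ S K) : K ⊆ S := by
  obtain ⟨c, rfl⟩ := h
  rintro _ ⟨u, -, rfl⟩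
  exact u.2

lemma mem_of_adj (h : IsCompOf Γ S K) (hv : v ∈ K) (hw : w ∈ S) (hadj : Γ.Adj v w) : w ∈ K := by
  obtain ⟨c, rfl⟩ := h
  obtain ⟨u, hu, rfl⟩ := hv
  exact ⟨⟨w, hw⟩, c.mem_supp_of_adj_mem_supp hu hadj, rfl⟩

/-- A component of `S` lying inside `S'` is connected there, so it stays inside the component
of `S'` that it meets. -/
lemma subset_of_mem_of_mem (hK : IsCompOf Γ S K) (hL : IsCompOf Γ S' L) (hKS' : K ⊆ S')
    (hvK : v ∈ K) (hvL : v ∈ L) : K ⊆ L := by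
  obtain ⟨c, rfl⟩ := hK
  obtain ⟨d, rfl⟩ := hL
  obtain ⟨w, hw, rfl⟩ := hvK
  obtain ⟨w', hw', hww'⟩ := hvL
  let f : c.toSimpleGraph →g Γ.induce S' :=
    ⟨fun y => ⟨y.1.1, hKS' ⟨y.1, y.2, rfl⟩⟩, fun h => h⟩
  rintro _ ⟨u, hu, rfl⟩
  refine ⟨f ⟨u, hu⟩, ?_, rfl⟩
  have hfw : f ⟨w, hw⟩ = w' := Subtype.ext hww'.symm
  rw [ConnectedComponent.mem_supp_iff] at hw' ⊢
  rw [← hw', ← hfw, ConnectedComponent.eq]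
  exact (c.reachable_toSimpleGraph hu hw).map f

lemma eq_of_mem_of_mem (hK : IsCompOf Γ S K) (hL : IsCompOf Γ S L) (hvK : v ∈ K)
    (hvL : v ∈ L) : K = L :=
  (hK.subset_of_mem_of_mem hL hK.subset hvK hvL).antisymm
    (hL.subset_of_mem_of_mem hK hL.subset hvL hvK)

lemma notMem_self (h : IsCompOf Γ (Gstar Γ a)ᶜ K) : a ∉ K :=
  fun ha => (mem_compl_gstar_iff.1 (h.subset ha)).1 rfl

lemma not_adj (h : IsCompOf Γ (Gstar Γ a)ᶜ K) (hv : v ∈ K) : ¬Γ.Adj a v :=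
  (mem_compl_gstar_iff.1 (h.subset hv)).2

lemma subset_compl_gstar (h : IsCompOf Γ (Gstar Γ a)ᶜ K) (hb : b ∈ (Gstar Γ a)ᶜ)
    (hbK : b ∉ K) : K ⊆ (Gstar Γ b)ᶜ := fun _ hv =>
  mem_compl_gstar_iff.2 ⟨fun hvb => hbK (hvb ▸ hv), fun hbv => hbK (h.mem_of_adj hv hb hbv.symm)⟩

lemma eq_of_notMem_of_notMem (hK : IsCompOf Γ (Gstar Γ a)ᶜ K) (hL : IsCompOf Γ (Gstar Γ b)ᶜ L)
    (hab : a ≠ b) (hnadj : ¬Γ.Adj a b) (haL : a ∉ L) (hbK : b ∉ K) (hvK : v ∈ K)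
    (hvL : v ∈ L) : K = L := by
  have hb : b ∈ (Gstar Γ a)ᶜ := mem_compl_gstar_iff.2 ⟨hab.symm, hnadj⟩
  have ha : a ∈ (Gstar Γ b)ᶜ := mem_compl_gstar_iff.2 ⟨hab, fun h => hnadj h.symm⟩
  exact (hK.subset_of_mem_of_mem hL (hK.subset_compl_gstar hb hbK) hvK hvL).antisymm
    (hL.subset_of_mem_of_mem hK (hL.subset_compl_gstar ha haL) hvL hvK)

end IsCompOf

section RAAG

variable {a b : V}

lemma raagGen_commute (h : Γ.Adj a b) : Commute (raagGen Γ a) (raagGen Γ b) :=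
  commutatorElement_eq_one_iff_commute.1 <| by
    simpa [commutatorElement_def, raagGen, PresentedGroup.of] using
      PresentedGroup.one_of_mem (rels := raagRels Γ) ⟨a, b, h, rfl⟩

lemma mulAut_ext_raagGen {φ ψ : MulAut (RAAG Γ)}
    (h : ∀ v, φ (raagGen Γ v) = ψ (raagGen Γ v)) : φ = ψ :=
  MulEquiv.toMonoidHom_injective (PresentedGroup.ext h)

lemma commute_of_raagGen {φ ψ : MulAut (RAAG Γ)}
    (h : ∀ v, φ (ψ (raagGen Γ v)) = ψ (φ (raagGen Γ v))) : Commute φ ψ :=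
  mulAut_ext_raagGen h

lemma not_commute_of_map_ne {G : Type*} [Group G] {φ ψ : MulAut (RAAG Γ)} (χ : RAAG Γ →* G)
    (v : V) (h : χ (φ (ψ (raagGen Γ v))) ≠ χ (ψ (φ (raagGen Γ v)))) : ¬Commute φ ψ :=
  fun hc => h (by rw [← MulAut.mul_apply, hc.eq, MulAut.mul_apply])

def raagLift {G : Type*} [Group G] (f : V → G) (hf : ∀ c d, Γ.Adj c d → Commute (f c) (f d)) :
    RAAG Γ →* G :=
  PresentedGroup.toGroup (f := f) <| by
    rintro _ ⟨c, d, hcd, rfl⟩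
    simp [(hf c d hcd).eq]

@[simp]
lemma raagLift_raagGen {G : Type*} [Group G] (f : V → G)
    (hf : ∀ c d, Γ.Adj c d → Commute (f c) (f d)) (v : V) : raagLift f hf (raagGen Γ v) = f v :=
  PresentedGroup.toGroup.of _

lemma commute_of_isIndepSet {G : Type*} [Group G] {f : V → G} {T : Set V} (hT : Γ.IsIndepSet T)
    (hf : ∀ u ∉ T, f u = 1) {c d : V} (h : Γ.Adj c d) : Commute (f c) (f d) := by
  by_cases hc : c ∈ T
  · by_cases hd : d ∈ T
    · exact absurd h (hT hc hd h.ne)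
    · exact hf d hd ▸ Commute.one_right _
  · exact hf c hc ▸ Commute.one_left _

end RAAG

open Classical in
noncomputable def tripleRep (a b w u : V) : Equiv.Perm (Fin 4) :=
  if u = a then Equiv.swap 0 1 else if u = b then Equiv.swap 1 2
  else if u = w then Equiv.swap 2 3 else 1

section tripleRep

variable {a b w : V}

lemma tripleRep_left : tripleRep a b w a = Equiv.swap 0 1 := by simp [tripleRep]

lemma tripleRep_middle (hba : b ≠ a) : tripleRep a b w b = Equiv.swap 1 2 := by
  simp [tripleRep, hba]

lemma tripleRep_right (hwa : w ≠ a) (hwb : w ≠ b) : tripleRep a b w w = Equiv.swap 2 3 := by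
  simp [tripleRep, hwa, hwb]

lemma tripleRep_commute (hab : ¬Γ.Adj a b) (haw : ¬Γ.Adj a w) (hbw : ¬Γ.Adj b w) (c d : V)
    (h : Γ.Adj c d) : Commute (tripleRep a b w c) (tripleRep a b w d) := by
  refine commute_of_isIndepSet (T := {a, b, w}) ?_ (fun u hu => ?_) h
  · rintro x hx y hy - hxy
    simp only [Set.mem_insert_iff, Set.mem_singleton_iff] at hx hy
    rcases hx with rfl | rfl | rfl <;> rcases hy with rfl | rfl | rfl <;>
      simp_all [adj_comm]
  · simp only [Set.mem_insert_iff, Set.mem_singleton_iff, not_or] at hu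
    simp [tripleRep, hu.1, hu.2.1, hu.2.2]

end tripleRep

namespace IsPartialConj

variable {a b v : V} {K L : Set V} {φ ψ : MulAut (RAAG Γ)}

lemma apply_of_mem (h : IsPartialConj Γ a K φ) (hv : v ∈ K) :
    φ (raagGen Γ v) = (raagGen Γ a)⁻¹ * raagGen Γ v * raagGen Γ a :=
  h.2.1 v hv

lemma apply_of_notMem (h : IsPartialConj Γ a K φ) (hv : v ∉ K) : φ (raagGen Γ v) = raagGen Γ v :=
  h.2.2 v hv

lemma commute (hφ : IsPartialConj Γ a K φ) (hψ : IsPartialConj Γ b L ψ) (haL : a ∉ L)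
    (hbK : b ∉ K) (hKL : ∀ v ∈ K, v ∈ L → Commute (raagGen Γ a) (raagGen Γ b)) :
    Commute φ ψ := by
  refine commute_of_raagGen fun v => ?_
  by_cases hvK : v ∈ K <;> by_cases hvL : v ∈ L <;>
    simp only [hφ.apply_of_mem, hφ.apply_of_notMem, hψ.apply_of_mem, hψ.apply_of_notMem,
      hvK, hvL, haL, hbK, map_mul, map_inv, not_false_eq_true]
  have hconj : ∀ x y : RAAG Γ, y⁻¹ * (x⁻¹ * raagGen Γ v * x) * y =
      (x * y)⁻¹ * raagGen Γ v * (x * y) := fun x y => by group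
  rw [hconj, hconj, (hKL v hvK hvL).eq]

lemma commute_of_adj (hφ : IsPartialConj Γ a K φ) (hψ : IsPartialConj Γ b L ψ)
    (hab : Γ.Adj a b) : Commute φ ψ :=
  hφ.commute hψ (fun ha => hψ.1.not_adj ha hab.symm) (fun hb => hφ.1.not_adj hb hab)
    fun _ _ _ => raagGen_commute hab

lemma not_commute_of_mem_of_mem (hφ : IsPartialConj Γ a K φ) (hψ : IsPartialConj Γ b L ψ)
    (haL : a ∈ L) (hbK : b ∈ K) : ¬Commute φ ψ := by
  have hba : b ≠ a := ne_of_mem_of_not_mem hbK hφ.1.notMem_self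
  have hab : ¬Γ.Adj a b := hφ.1.not_adj hbK
  refine not_commute_of_map_ne
    (raagLift (tripleRep a b a) (tripleRep_commute hab Γ.irrefl fun h => hab h.symm)) a ?_
  simp only [hψ.apply_of_mem haL, hφ.apply_of_mem hbK, hφ.apply_of_notMem hφ.1.notMem_self,
    map_mul, map_inv, raagLift_raagGen, tripleRep_left, tripleRep_middle hba]
  decide

lemma not_commute_of_mem_of_not_subset (hφ : IsPartialConj Γ a K φ)
    (hψ : IsPartialConj Γ b L ψ) (haL : a ∈ L) (hbK : b ∉ K) (hKL : ¬K ⊆ L) : ¬Commute φ ψ := by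
  obtain ⟨v, hvK, hvL⟩ := Set.not_subset.1 hKL
  have hab : ¬Γ.Adj a b := fun h => hψ.1.not_adj haL h.symm
  have hb : b ∈ (Gstar Γ a)ᶜ :=
    mem_compl_gstar_iff.2 ⟨(ne_of_mem_of_not_mem haL hψ.1.notMem_self).symm, hab⟩
  have hbv : ¬Γ.Adj b v := fun h => hbK (hφ.1.mem_of_adj hvK hb h.symm)
  refine not_commute_of_map_ne
    (raagLift (tripleRep a b v) (tripleRep_commute hab (hφ.1.not_adj hvK) hbv)) v ?_
  simp only [hψ.apply_of_mem haL, hψ.apply_of_notMem hvL, hφ.apply_of_mem hvK, map_mul, map_inv,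
    raagLift_raagGen, tripleRep_left, tripleRep_middle (mem_compl_gstar_iff.1 hb).1,
    tripleRep_right (ne_of_mem_of_not_mem hvK hφ.1.notMem_self) (ne_of_mem_of_not_mem hvK hbK)]
  decide

lemma not_commute_of_eq (hφ : IsPartialConj Γ a K φ) (hψ : IsPartialConj Γ b L ψ)
    (hab : a ≠ b) (hnadj : ¬Γ.Adj a b) (hKL : K = L) : ¬Commute φ ψ := by
  subst hKL
  obtain ⟨v, hv⟩ := hφ.1.nonempty
  refine not_commute_of_map_ne
    (raagLift (tripleRep a b v) (tripleRep_commute hnadj (hφ.1.not_adj hv) (hψ.1.not_adj hv))) v ?_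
  simp only [hψ.apply_of_mem hv, hφ.apply_of_mem hv, hψ.apply_of_notMem hφ.1.notMem_self,
    hφ.apply_of_notMem hψ.1.notMem_self, map_mul, map_inv, raagLift_raagGen, tripleRep_left,
    tripleRep_middle hab.symm,
    tripleRep_right (ne_of_mem_of_not_mem hv hφ.1.notMem_self)
      (ne_of_mem_of_not_mem hv hψ.1.notMem_self)]
  decide

end IsPartialConj

def DeltaCompatible (p q : V × Set V) : Prop := p.1 ∈ q.2 ∨ q.1 ∈ p.2 ∨ p.2 = q.2

lemma DeltaCompatible.symm {p q : V × Set V} (h : DeltaCompatible p q) : DeltaCompatible q p := by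
  rcases h with h | h | h
  exacts [Or.inr (Or.inl h), Or.inl h, Or.inr (Or.inr h.symm)]

lemma not_deltaCompatible_of_ne {a : V} {K₁ K₂ : Set V} (hK₁ : IsCompOf Γ (Gstar Γ a)ᶜ K₁)
    (hK₂ : IsCompOf Γ (Gstar Γ a)ᶜ K₂) (hK : K₁ ≠ K₂) : ¬DeltaCompatible (a, K₁) (a, K₂) := by
  rintro (h | h | h)
  exacts [hK₂.notMem_self h, hK₁.notMem_self h, hK h]

lemma IsDeltaAdmissiblePartition.deltaCompatible_or_mem_iff_mem {Q₁ Q₂ : Set (V × Set V)}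
    (h : IsDeltaAdmissiblePartition Q₁ Q₂) {p q : V × Set V} (hp : p ∈ Q₁ ∪ Q₂)
    (hq : q ∈ Q₁ ∪ Q₂) : DeltaCompatible p q ∨ (p ∈ Q₁ ↔ q ∈ Q₁) := by
  obtain ⟨hdisj, -, -, hcross⟩ := h
  rcases hp with hp | hp <;> rcases hq with hq | hq
  · exact Or.inr (iff_of_true hp hq)
  · exact Or.inl (hcross p hp q hq)
  · exact Or.inl (DeltaCompatible.symm (hcross q hq p hp))
  · exact Or.inr (iff_of_false (hdisj.notMem_of_mem_right hp) (hdisj.notMem_of_mem_right hq))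

section pairPair

variable {a b : V} {K₁ K₂ L₁ L₂ : Set V}

lemma ncard_filter_fst_pair_pair (hab : a ≠ b) (hK : K₁ ≠ K₂) (hL : L₁ ≠ L₂) (v : V) :
    {p ∈ ({(a, K₁), (a, K₂), (b, L₁), (b, L₂)} : Set (V × Set V)) | p.1 = v}.ncard = 0 ∨
      {p ∈ ({(a, K₁), (a, K₂), (b, L₁), (b, L₂)} : Set (V × Set V)) | p.1 = v}.ncard = 2 := by
  by_cases hva : v = a
  · subst hva
    right
    convert Set.ncard_pair (a := (v, K₁)) (b := (v, K₂)) (by simpa using hK) using 2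
    ext ⟨x, X⟩
    simp only [Set.mem_ofPred_eq, Set.mem_insert_iff, Set.mem_singleton_iff, Prod.mk.injEq]
    grind
  by_cases hvb : v = b
  · subst hvb
    right
    convert Set.ncard_pair (a := (v, L₁)) (b := (v, L₂)) (by simpa using hL) using 2
    ext ⟨x, X⟩
    simp only [Set.mem_ofPred_eq, Set.mem_insert_iff, Set.mem_singleton_iff, Prod.mk.injEq]
    grind
  · left
    convert Set.ncard_empty (V × Set V) using 2
    ext ⟨x, X⟩
    simp only [Set.mem_ofPred_eq, Set.mem_insert_iff, Set.mem_singleton_iff, Prod.mk.injEq]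
    grind

lemma isDeltaPSet_pair_pair_iff (hab : a ≠ b) (hK₁ : IsCompOf Γ (Gstar Γ a)ᶜ K₁)
    (hK₂ : IsCompOf Γ (Gstar Γ a)ᶜ K₂) (hL₁ : IsCompOf Γ (Gstar Γ b)ᶜ L₁)
    (hL₂ : IsCompOf Γ (Gstar Γ b)ᶜ L₂) (hK : K₁ ≠ K₂) (hL : L₁ ≠ L₂) :
    IsDeltaPSet Γ {(a, K₁), (a, K₂), (b, L₁), (b, L₂)} ↔
      DeltaCompatible (a, K₁) (b, L₁) ∧ DeltaCompatible (a, K₁) (b, L₂) ∧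
        DeltaCompatible (a, K₂) (b, L₁) ∧ DeltaCompatible (a, K₂) (b, L₂) := by
  constructor
  · rintro ⟨-, -, Q₁, Q₂, hQ, hpart⟩
    have side : ∀ p ∈ Q₁ ∪ Q₂, ∀ q ∈ Q₁ ∪ Q₂, DeltaCompatible p q ∨ (p ∈ Q₁ ↔ q ∈ Q₁) :=
      fun p hp q hq => hpart.deltaCompatible_or_mem_iff_mem hp hq
    simp only [hQ, Set.mem_insert_iff, Set.mem_singleton_iff, forall_eq_or_imp, forall_eq]
      at side
    have ha := side.1.2.1.resolve_left (not_deltaCompatible_of_ne hK₁ hK₂ hK)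
    have hb := side.2.2.1.2.2.2.resolve_left (not_deltaCompatible_of_ne hL₁ hL₂ hL)
    obtain ⟨x, hx₁⟩ := hpart.2.1
    obtain ⟨y, hy₂⟩ := hpart.2.2.1
    have hy₁ : y ∉ Q₁ := hpart.1.notMem_of_mem_right hy₂
    have hx : x ∈ Q₁ ∪ Q₂ := Or.inl hx₁
    have hy : y ∈ Q₁ ∪ Q₂ := Or.inr hy₂
    simp only [hQ, Set.mem_insert_iff, Set.mem_singleton_iff] at hx hy
    have hsplit : ¬((a, K₁) ∈ Q₁ ↔ (b, L₁) ∈ Q₁) := fun h => by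
      have hK₁Q : (a, K₁) ∈ Q₁ := by
        rcases hx with rfl | rfl | rfl | rfl
        exacts [hx₁, ha.2 hx₁, h.2 hx₁, h.2 (hb.2 hx₁)]
      rcases hy with rfl | rfl | rfl | rfl
      exacts [hy₁ hK₁Q, hy₁ (ha.1 hK₁Q), hy₁ (h.1 hK₁Q), hy₁ (hb.1 (h.1 hK₁Q))]
    exact ⟨side.1.2.2.1.resolve_right hsplit,
      side.1.2.2.2.resolve_right fun h => hsplit (h.trans hb.symm),
      side.2.1.2.2.1.resolve_right fun h => hsplit (ha.trans h),
      side.2.1.2.2.2.resolve_right fun h => hsplit (ha.trans (h.trans hb.symm))⟩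
  · rintro ⟨h₁₁, h₁₂, h₂₁, h₂₂⟩
    refine ⟨?_, fun v _ => ncard_filter_fst_pair_pair hab hK hL v,
      {(a, K₁), (a, K₂)}, {(b, L₁), (b, L₂)}, by rw [Set.insert_union, Set.singleton_union],
      ?_, ⟨_, Or.inl rfl⟩, ⟨_, Or.inl rfl⟩, ?_⟩
    · rintro p (rfl | rfl | rfl | rfl)
      exacts [hK₁, hK₂, hL₁, hL₂]
    · simp [hab.symm]
    · rintro p (rfl | rfl) q (rfl | rfl)
      exacts [h₁₁, h₁₂, h₂₁, h₂₂]

end pairPair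

section criteria

variable {a b : V} {K K' L L' : Set V} {φ ψ : MulAut (RAAG Γ)}

lemma DeltaCompatible.eq_of_adj (hK : IsCompOf Γ (Gstar Γ a)ᶜ K)
    (hL : IsCompOf Γ (Gstar Γ b)ᶜ L) (hab : Γ.Adj a b) (h : DeltaCompatible (a, K) (b, L)) :
    K = L := by
  rcases h with h | h | h
  exacts [absurd hab.symm (hL.not_adj h), absurd hab (hK.not_adj h), h]

lemma not_subset_of_deltaCompatible (hK : K.Nonempty) (hL : IsCompOf Γ (Gstar Γ b)ᶜ L)
    (hL' : IsCompOf Γ (Gstar Γ b)ᶜ L') (hLL' : L ≠ L') (haL : a ∈ L) (hbK : b ∉ K)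
    (h : DeltaCompatible (a, K) (b, L')) : ¬K ⊆ L := by
  intro hKL
  rcases h with haL' | hbK' | (hKL' : K = L')
  · exact hLL' (hL.eq_of_mem_of_mem hL' haL haL')
  · exact hbK hbK'
  · obtain ⟨v, hv⟩ := hK
    exact hLL' (hL.eq_of_mem_of_mem hL' (hKL hv) (hKL' ▸ hv))

namespace IsPartialConj

lemma deltaCompatible_of_not_commute (hφ : IsPartialConj Γ a K φ)
    (hψ : IsPartialConj Γ b L ψ) (hab : a ≠ b) (h : ¬Commute φ ψ) :
    DeltaCompatible (a, K) (b, L) := by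
  by_contra hKL
  obtain ⟨haL, hbK, hne⟩ := not_or.1 hKL |>.imp_right not_or.1
  by_cases hadj : Γ.Adj a b
  · exact h (hφ.commute_of_adj hψ hadj)
  · exact h <| hφ.commute hψ haL hbK fun v hvK hvL =>
      absurd (hφ.1.eq_of_notMem_of_notMem hψ.1 hab hadj haL hbK hvK hvL) hne

lemma not_commute_of_deltaCompatible (hφ : IsPartialConj Γ a K φ)
    (hψ : IsPartialConj Γ b L ψ) (hK' : IsCompOf Γ (Gstar Γ a)ᶜ K')
    (hL' : IsCompOf Γ (Gstar Γ b)ᶜ L') (hKK' : K ≠ K') (hLL' : L ≠ L') (hab : a ≠ b)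
    (hnadj : ¬Γ.Adj a b) (hKL : DeltaCompatible (a, K) (b, L))
    (hKL' : DeltaCompatible (a, K) (b, L')) (hK'L : DeltaCompatible (a, K') (b, L)) :
    ¬Commute φ ψ := by
  by_cases haL : a ∈ L <;> by_cases hbK : b ∈ K
  · exact hφ.not_commute_of_mem_of_mem hψ haL hbK
  · exact hφ.not_commute_of_mem_of_not_subset hψ haL hbK
      (not_subset_of_deltaCompatible hφ.1.nonempty hψ.1 hL' hLL' haL hbK hKL')
  · exact fun h => hψ.not_commute_of_mem_of_not_subset hφ hbK haL
      (not_subset_of_deltaCompatible hψ.1.nonempty hφ.1 hK' hKK' hbK haL hK'L.symm) h.symm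
  · refine hφ.not_commute_of_eq hψ hab hnadj ?_
    rcases hKL with h | h | h
    exacts [absurd h haL, absurd h hbK, h]

end IsPartialConj

end criteria

theorem noncommuting_iff_delta_p_set_general {V : Type} (Γ : SimpleGraph V)
    (a b : V) (hab : a ≠ b)
    (K₁ K₂ L₁ L₂ : Set V) (hK : K₁ ≠ K₂) (hL : L₁ ≠ L₂)
    (φ₁ φ₂ ψ₁ ψ₂ : MulAut (RAAG Γ))
    (h1 : IsPartialConj Γ a K₁ φ₁) (h2 : IsPartialConj Γ a K₂ φ₂)
    (h3 : IsPartialConj Γ b L₁ ψ₁) (h4 : IsPartialConj Γ b L₂ ψ₂) :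
    (¬Commute φ₁ ψ₁ ∧ ¬Commute φ₁ ψ₂ ∧ ¬Commute φ₂ ψ₁ ∧ ¬Commute φ₂ ψ₂) ↔
      IsDeltaPSet Γ {(a, K₁), (a, K₂), (b, L₁), (b, L₂)} := by
  rw [isDeltaPSet_pair_pair_iff hab h1.1 h2.1 h3.1 h4.1 hK hL]
  constructor
  · rintro ⟨n₁₁, n₁₂, n₂₁, n₂₂⟩
    exact ⟨h1.deltaCompatible_of_not_commute h3 hab n₁₁,
      h1.deltaCompatible_of_not_commute h4 hab n₁₂,
      h2.deltaCompatible_of_not_commute h3 hab n₂₁,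
      h2.deltaCompatible_of_not_commute h4 hab n₂₂⟩
  · rintro ⟨c₁₁, c₁₂, c₂₁, c₂₂⟩
    have hnadj : ¬Γ.Adj a b := fun hadj =>
      hL ((c₁₁.eq_of_adj h1.1 h3.1 hadj).symm.trans (c₁₂.eq_of_adj h1.1 h4.1 hadj))
    exact ⟨h1.not_commute_of_deltaCompatible h3 h2.1 h4.1 hK hL hab hnadj c₁₁ c₁₂ c₂₁,
      h1.not_commute_of_deltaCompatible h4 h2.1 h3.1 hK hL.symm hab hnadj c₁₂ c₁₁ c₂₂,
      h2.not_commute_of_deltaCompatible h3 h1.1 h4.1 hK.symm hL hab hnadj c₂₁ c₂₂ c₁₁,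
      h2.not_commute_of_deltaCompatible h4 h1.1 h3.1 hK.symm hL.symm hab hnadj c₂₂ c₂₁ c₁₂⟩

/-- Lemma 4.4. Four distinct partial conjugations
`π_{a,K₁}, π_{a,K₂}, π_{b,L₁}, π_{b,L₂}` pairwise fail to commute (across the two acting
letters) if and only if they form a δ-p-set. -/
theorem noncommuting_iff_delta_p_set {V : Type} [Fintype V] (Γ : SimpleGraph V)
    (hZ : (Zset Γ).Nonempty) (a b : V) (hab : a ≠ b)
    (K₁ K₂ L₁ L₂ : Set V) (hK : K₁ ≠ K₂) (hL : L₁ ≠ L₂)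
    (φ₁ φ₂ ψ₁ ψ₂ : MulAut (RAAG Γ))
    (h1 : IsPartialConj Γ a K₁ φ₁) (h2 : IsPartialConj Γ a K₂ φ₂)
    (h3 : IsPartialConj Γ b L₁ ψ₁) (h4 : IsPartialConj Γ b L₂ ψ₂) :
    (¬Commute φ₁ ψ₁ ∧ ¬Commute φ₁ ψ₂ ∧ ¬Commute φ₂ ψ₁ ∧ ¬Commute φ₂ ψ₂) ↔
      IsDeltaPSet Γ {(a, K₁), (a, K₂), (b, L₁), (b, L₂)} :=
  noncommuting_iff_delta_p_set_general Γ a b hab K₁ K₂ L₁ L₂ hK hL φ₁ φ₂ ψ₁ ψ₂ h1 h2 h3 h4
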